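/- arXiv:1509.08030 — 4 statements merged into one kernel-verified Lean document; each statement's English description precedes it below -/
import Mathlib

section
/- For all integers m, l ≥ 2 and every n ≥ 1, the product of ideals M_m(A_n)·M_l(A_n) is contained in M_{m+l−2}(A_n). -/
/-- Lower central series of an associative unital algebra `R` over `K`, as `K`-submodules:
`lowerCentral K R 1 = ⊤` and, for `i ≥ 1`, `lowerCentral K R (i+1)` is the `K`-linear span of
the brackets `⁅a, l⁆ = a * l - l * a` with `a : R` and `l ∈ lowerCentral K R i`.
(By convention `lowerCentral K R 0 = ⊤` as well; only indices `i ≥ 1` are used.) -/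
def lowerCentral (K : Type*) [CommRing K] (R : Type*) [Ring R] [Algebra K R] : ℕ → Submodule K R
  | 0 => ⊤
  | 1 => ⊤
  | n + 2 => Submodule.span K
      {x : R | ∃ a : R, ∃ l ∈ lowerCentral K R (n + 1), x = a * l - l * a}

/-- `lcsIdeal K R i` is the two-sided ideal `M_i(R)` of `R` generated by `lowerCentral K R i`,
realized as the `K`-submodule spanned by all products `a * l * b` with `a b : R` and
`l ∈ lowerCentral K R i`.  Products of such ideals are taken using the multiplication of
`Submodule K R` (the span of pairwise products), which agrees with the product of
two-sided ideals. -/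
def lcsIdeal (K : Type*) [CommRing K] (R : Type*) [Ring R] [Algebra K R] (i : ℕ) : Submodule K R :=
  Submodule.span K {x : R | ∃ a b : R, ∃ l ∈ lowerCentral K R i, x = a * l * b}


section GuptaLevin

variable (K : Type*) [CommRing K] {R : Type*} [Ring R] [Algebra K R]

lemma mem_L_one (w : R) : w ∈ lowerCentral K R 1 := by
  show w ∈ (⊤ : Submodule K R)
  exact Submodule.mem_top

lemma lc_succ_le : ∀ n : ℕ, lowerCentral K R (n + 1) ≤ lowerCentral K R n
  | 0 => le_top
  | 1 => le_top
  | (n + 2) => by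
      show lowerCentral K R (n + 3) ≤ lowerCentral K R (n + 2)
      have : lowerCentral K R (n + 3) = Submodule.span K
          {x : R | ∃ a : R, ∃ l ∈ lowerCentral K R (n + 2), x = a * l - l * a} := rfl
      rw [this]
      apply Submodule.span_le.2
      rintro w ⟨a, l, hl, rfl⟩
      exact Submodule.subset_span ⟨a, l, lc_succ_le (n + 1) hl, rfl⟩

lemma lc_le (i j : ℕ) (h : i ≤ j) : lowerCentral K R j ≤ lowerCentral K R i := by
  induction j, h using Nat.le_induction with
  | base => exact le_rfl
  | succ j hij ih => exact (lc_succ_le K j).trans ih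

lemma comm_mem_one {i : ℕ} {x : R} (hx : x ∈ lowerCentral K R i) (y : R) :
    x * y - y * x ∈ lowerCentral K R (i + 1) := by
  cases i with
  | zero => exact mem_L_one K _
  | succ n =>
      have h : y * x - x * y ∈ lowerCentral K R (n + 2) :=
        Submodule.subset_span ⟨y, x, hx, rfl⟩
      have h2 := neg_mem h
      rwa [neg_sub] at h2

lemma comm_mem : ∀ (j : ℕ) {i : ℕ} {x y : R}, x ∈ lowerCentral K R i →
    y ∈ lowerCentral K R j → x * y - y * x ∈ lowerCentral K R (i + j)
  | 0, i, x, y, hx, _ => lc_succ_le K i (comm_mem_one K hx y)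
  | 1, i, x, y, hx, _ => comm_mem_one K hx y
  | (j + 2), i, x, y, hx, hy => by
      have hy' : y ∈ Submodule.span K
          {w : R | ∃ s : R, ∃ l ∈ lowerCentral K R (j + 1), w = s * l - l * s} := hy
      clear hy
      induction hy' using Submodule.span_induction with
      | mem v hv =>
          obtain ⟨s, l, hl, rfl⟩ := hv
          have h1 := comm_mem (j + 1) (comm_mem_one K hx s) hl
          have h2 := comm_mem (j + 1) hx hl
          have h3 := comm_mem_one K h2 s
          have h4 := neg_mem h3
          rw [neg_sub] at h4
          have e1 : i + 1 + (j + 1) = i + (j + 2) := by omega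
          have e2 : i + (j + 1) + 1 = i + (j + 2) := by omega
          rw [e1] at h1
          rw [e2] at h4
          have hEq : x * (s * l - l * s) - (s * l - l * s) * x =
              ((x * s - s * x) * l - l * (x * s - s * x)) +
                (s * (x * l - l * x) - (x * l - l * x) * s) := by noncomm_ring
          rw [hEq]
          exact add_mem h1 h4
      | zero => simpa using zero_mem _
      | add v w _ _ ihv ihw =>
          have hEq : x * (v + w) - (v + w) * x = (x * v - v * x) + (x * w - w * x) := by
            noncomm_ring
          rw [hEq]
          exact add_mem ihv ihw
      | smul t v _ ihv =>
          have hEq : x * (t • v) - (t • v) * x = t • (x * v - v * x) := by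
            rw [mul_smul_comm, smul_mul_assoc, smul_sub]
          rw [hEq]
          exact Submodule.smul_mem _ t ihv

lemma comm_mem' {i j : ℕ} {x y : R} (hx : x ∈ lowerCentral K R i)
    (hy : y ∈ lowerCentral K R j) : x * y - y * x ∈ lowerCentral K R (i + j) :=
  comm_mem K j hx hy

lemma mem_lcsIdeal (i : ℕ) (a b l : R) (hl : l ∈ lowerCentral K R i) :
    a * l * b ∈ lcsIdeal K R i :=
  Submodule.subset_span ⟨a, b, l, hl, rfl⟩

lemma lcsIdeal_le (i j : ℕ) (h : i ≤ j) : lcsIdeal K R j ≤ lcsIdeal K R i := by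
  apply Submodule.span_le.2
  rintro w ⟨a, b, l, hl, rfl⟩
  exact Submodule.subset_span ⟨a, b, l, lc_le K i j h hl, rfl⟩

lemma lcsIdeal_mul_left (i : ℕ) (r x : R) (hx : x ∈ lcsIdeal K R i) :
    r * x ∈ lcsIdeal K R i := by
  induction hx using Submodule.span_induction with
  | mem w hw =>
      obtain ⟨a, b, l, hl, rfl⟩ := hw
      have h := mem_lcsIdeal K i (r * a) b l hl
      have e : r * a * l * b = r * (a * l * b) := by noncomm_ring
      rwa [e] at h
  | zero => simpa using zero_mem _
  | add v w _ _ ihv ihw =>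
      rw [mul_add]
      exact add_mem ihv ihw
  | smul t v _ ihv =>
      rw [mul_smul_comm]
      exact Submodule.smul_mem _ t ihv

lemma lcsIdeal_mul_right (i : ℕ) (x r : R) (hx : x ∈ lcsIdeal K R i) :
    x * r ∈ lcsIdeal K R i := by
  induction hx using Submodule.span_induction with
  | mem w hw =>
      obtain ⟨a, b, l, hl, rfl⟩ := hw
      have h := mem_lcsIdeal K i a (b * r) l hl
      have e : a * l * (b * r) = a * l * b * r := by noncomm_ring
      rwa [e] at h
  | zero => simpa using zero_mem _
  | add v w _ _ ihv ihw =>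
      rw [add_mul]
      exact add_mem ihv ihw
  | smul t v _ ihv =>
      rw [smul_mul_assoc]
      exact Submodule.smul_mem _ t ihv

/-- The key lemma: `L_p · R · L_q ⊆ M_{p+q-2}`. -/
lemma key_lemma : ∀ (q p : ℕ) (u e v : R), u ∈ lowerCentral K R p →
    v ∈ lowerCentral K R q → u * e * v ∈ lcsIdeal K R (p + q - 2) := by
  intro q
  induction q using Nat.strong_induction_on with
  | _ q IH =>
  intro p u e v hu hv
  by_cases hq : q ≤ 2
  · have h1 := mem_lcsIdeal K p 1 (e * v) u hu
    have e1 : (1 : R) * u * (e * v) = u * e * v := by noncomm_ring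
    rw [e1] at h1
    exact lcsIdeal_le K _ _ (by omega) h1
  by_cases hp : p ≤ 2
  · have h1 := mem_lcsIdeal K q (u * e) 1 v hv
    rw [mul_one] at h1
    exact lcsIdeal_le K _ _ (by omega) h1
  obtain ⟨k, rfl⟩ : ∃ k, p = k + 3 := ⟨p - 3, by omega⟩
  obtain ⟨j, rfl⟩ : ∃ j, q = j + 3 := ⟨q - 3, by omega⟩
  rw [show k + 3 + (j + 3) - 2 = k + j + 4 from by omega]
  have hIH : ∀ P Q : R, P ∈ lowerCentral K R (k + 4) → Q ∈ lowerCentral K R (j + 2) →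
      P * Q ∈ lcsIdeal K R (k + j + 4) := by
    intro P Q hP hQ
    have h := IH (j + 2) (by omega) (k + 4) P 1 Q hP hQ
    rw [mul_one, show k + 4 + (j + 2) - 2 = k + j + 4 from by omega] at h
    exact h
  have hu' : u ∈ Submodule.span K
      {w : R | ∃ s : R, ∃ l ∈ lowerCentral K R (k + 2), w = s * l - l * s} := hu
  clear hu
  induction hu' using Submodule.span_induction with
  | zero => rw [zero_mul, zero_mul]; exact zero_mem _
  | add p1 p2 _ _ ih1 ih2 => rw [add_mul, add_mul]; exact add_mem ih1 ih2
  | smul t p1 _ ih1 => rw [smul_mul_assoc, smul_mul_assoc]; exact Submodule.smul_mem _ t ih1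
  | mem ugen hugen =>
  obtain ⟨x, a, ha, rfl⟩ := hugen
  have hv' : v ∈ Submodule.span K
      {w : R | ∃ s : R, ∃ l ∈ lowerCentral K R (j + 2), w = s * l - l * s} := hv
  clear hv
  induction hv' using Submodule.span_induction with
  | zero => rw [mul_zero]; exact zero_mem _
  | add p1 p2 _ _ ih1 ih2 => rw [mul_add]; exact add_mem ih1 ih2
  | smul t p1 _ ih1 => rw [mul_smul_comm]; exact Submodule.smul_mem _ t ih1
  | mem vgen hvgen =>
  obtain ⟨y, w, hw, rfl⟩ := hvgen
  have hw' : w ∈ Submodule.span K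
      {r : R | ∃ s : R, ∃ l ∈ lowerCentral K R (j + 1), r = s * l - l * s} := hw
  clear hw
  induction hw' using Submodule.span_induction with
  | zero => simpa using zero_mem _
  | add p1 p2 _ _ ih1 ih2 =>
      have hEq : (x * a - a * x) * e * (y * (p1 + p2) - (p1 + p2) * y) =
          (x * a - a * x) * e * (y * p1 - p1 * y) +
            (x * a - a * x) * e * (y * p2 - p2 * y) := by noncomm_ring
      rw [hEq]
      exact add_mem ih1 ih2
  | smul t p1 _ ih1 =>
      have hEq : (x * a - a * x) * e * (y * (t • p1) - (t • p1) * y) =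
          t • ((x * a - a * x) * e * (y * p1 - p1 * y)) := by
        rw [mul_smul_comm, smul_mul_assoc, ← smul_sub, mul_smul_comm]
      rw [hEq]
      exact Submodule.smul_mem _ t ih1
  | mem wgen hwgen =>
  obtain ⟨z, c, hc, rfl⟩ := hwgen
  -- Now everything is explicit: u = x*a - a*x, v = y*(z*c-c*z) - (z*c-c*z)*y
  have h1 : z * (a * (c * x - x * c) - (c * x - x * c) * a) * y ∈ lcsIdeal K R (k + j + 4) :=
    mem_lcsIdeal K _ (z) (y) _ (lc_le K _ _ (by omega) (comm_mem' K ha (comm_mem' K hc (mem_L_one K (x)))))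
  have h2 : z * (a * (c * y - y * c) - (c * y - y * c) * a) * x ∈ lcsIdeal K R (k + j + 4) :=
    mem_lcsIdeal K _ (z) (x) _ (lc_le K _ _ (by omega) (comm_mem' K ha (comm_mem' K hc (mem_L_one K (y)))))
  have h3 : z * x * (a * (c * y - y * c) - (c * y - y * c) * a) * 1 ∈ lcsIdeal K R (k + j + 4) :=
    mem_lcsIdeal K _ (z * x) (1) _ (lc_le K _ _ (by omega) (comm_mem' K ha (comm_mem' K hc (mem_L_one K (y)))))
  have h4 : x * z * (a * (c * y - y * c) - (c * y - y * c) * a) * 1 ∈ lcsIdeal K R (k + j + 4) :=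
    mem_lcsIdeal K _ (x * z) (1) _ (lc_le K _ _ (by omega) (comm_mem' K ha (comm_mem' K hc (mem_L_one K (y)))))
  have h5 : x * (a * (c * z - z * c) - (c * z - z * c) * a) * y ∈ lcsIdeal K R (k + j + 4) :=
    mem_lcsIdeal K _ (x) (y) _ (lc_le K _ _ (by omega) (comm_mem' K ha (comm_mem' K hc (mem_L_one K (z)))))
  have h6 : y * (a * (c * z - z * c) - (c * z - z * c) * a) * x ∈ lcsIdeal K R (k + j + 4) :=
    mem_lcsIdeal K _ (y) (x) _ (lc_le K _ _ (by omega) (comm_mem' K ha (comm_mem' K hc (mem_L_one K (z)))))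
  have h7 : y * x * (a * (c * z - z * c) - (c * z - z * c) * a) * 1 ∈ lcsIdeal K R (k + j + 4) :=
    mem_lcsIdeal K _ (y * x) (1) _ (lc_le K _ _ (by omega) (comm_mem' K ha (comm_mem' K hc (mem_L_one K (z)))))
  have h8 : z * (a * (c * (x * y - y * x) - (x * y - y * x) * c) - (c * (x * y - y * x) - (x * y - y * x) * c) * a) * 1 ∈ lcsIdeal K R (k + j + 4) :=
    mem_lcsIdeal K _ (z) (1) _ (lc_le K _ _ (by omega) (comm_mem' K ha (comm_mem' K hc (comm_mem' K (mem_L_one K (x)) (mem_L_one K (y))))))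
  have h9 : z * (a * ((c * x - x * c) * y - y * (c * x - x * c)) - ((c * x - x * c) * y - y * (c * x - x * c)) * a) * 1 ∈ lcsIdeal K R (k + j + 4) :=
    mem_lcsIdeal K _ (z) (1) _ (lc_le K _ _ (by omega) (comm_mem' K ha (comm_mem' K (comm_mem' K hc (mem_L_one K (x))) (mem_L_one K (y)))))
  have h10 : z * (a * (c * (x*y) - (x*y) * c) - (c * (x*y) - (x*y) * c) * a) * 1 ∈ lcsIdeal K R (k + j + 4) :=
    mem_lcsIdeal K _ (z) (1) _ (lc_le K _ _ (by omega) (comm_mem' K ha (comm_mem' K hc (mem_L_one K (x*y)))))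
  have h11 : y * (a * (c * (x * z - z * x) - (x * z - z * x) * c) - (c * (x * z - z * x) - (x * z - z * x) * c) * a) * 1 ∈ lcsIdeal K R (k + j + 4) :=
    mem_lcsIdeal K _ (y) (1) _ (lc_le K _ _ (by omega) (comm_mem' K ha (comm_mem' K hc (comm_mem' K (mem_L_one K (x)) (mem_L_one K (z))))))
  have h12 : y * (a * ((c * x - x * c) * z - z * (c * x - x * c)) - ((c * x - x * c) * z - z * (c * x - x * c)) * a) * 1 ∈ lcsIdeal K R (k + j + 4) :=
    mem_lcsIdeal K _ (y) (1) _ (lc_le K _ _ (by omega) (comm_mem' K ha (comm_mem' K (comm_mem' K hc (mem_L_one K (x))) (mem_L_one K (z)))))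
  have h13 : 1 * (a * ((c * x - x * c) * z - z * (c * x - x * c)) - ((c * x - x * c) * z - z * (c * x - x * c)) * a) * y ∈ lcsIdeal K R (k + j + 4) :=
    mem_lcsIdeal K _ (1) (y) _ (lc_le K _ _ (by omega) (comm_mem' K ha (comm_mem' K (comm_mem' K hc (mem_L_one K (x))) (mem_L_one K (z)))))
  have h14 : 1 * (a * (c * (x*z) - (x*z) * c) - (c * (x*z) - (x*z) * c) * a) * y ∈ lcsIdeal K R (k + j + 4) :=
    mem_lcsIdeal K _ (1) (y) _ (lc_le K _ _ (by omega) (comm_mem' K ha (comm_mem' K hc (mem_L_one K (x*z)))))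
  have h15 : 1 * (a * ((c * y - y * c) * z - z * (c * y - y * c)) - ((c * y - y * c) * z - z * (c * y - y * c)) * a) * x ∈ lcsIdeal K R (k + j + 4) :=
    mem_lcsIdeal K _ (1) (x) _ (lc_le K _ _ (by omega) (comm_mem' K ha (comm_mem' K (comm_mem' K hc (mem_L_one K (y))) (mem_L_one K (z)))))
  have h16 : 1 * (a * (c * (y*z) - (y*z) * c) - (c * (y*z) - (y*z) * c) * a) * x ∈ lcsIdeal K R (k + j + 4) :=
    mem_lcsIdeal K _ (1) (x) _ (lc_le K _ _ (by omega) (comm_mem' K ha (comm_mem' K hc (mem_L_one K (y*z)))))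
  have h17 : 1 * (a * ((c * (x * y - y * x) - (x * y - y * x) * c) * z - z * (c * (x * y - y * x) - (x * y - y * x) * c)) - ((c * (x * y - y * x) - (x * y - y * x) * c) * z - z * (c * (x * y - y * x) - (x * y - y * x) * c)) * a) * 1 ∈ lcsIdeal K R (k + j + 4) :=
    mem_lcsIdeal K _ (1) (1) _ (lc_le K _ _ (by omega) (comm_mem' K ha (comm_mem' K (comm_mem' K hc (comm_mem' K (mem_L_one K (x)) (mem_L_one K (y)))) (mem_L_one K (z)))))
  have h18 : 1 * (a * (((c * x - x * c) * y - y * (c * x - x * c)) * z - z * ((c * x - x * c) * y - y * (c * x - x * c))) - (((c * x - x * c) * y - y * (c * x - x * c)) * z - z * ((c * x - x * c) * y - y * (c * x - x * c))) * a) * 1 ∈ lcsIdeal K R (k + j + 4) :=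
    mem_lcsIdeal K _ (1) (1) _ (lc_le K _ _ (by omega) (comm_mem' K ha (comm_mem' K (comm_mem' K (comm_mem' K hc (mem_L_one K (x))) (mem_L_one K (y))) (mem_L_one K (z)))))
  have h19 : 1 * (a * ((c * (x * z - z * x) - (x * z - z * x) * c) * y - y * (c * (x * z - z * x) - (x * z - z * x) * c)) - ((c * (x * z - z * x) - (x * z - z * x) * c) * y - y * (c * (x * z - z * x) - (x * z - z * x) * c)) * a) * 1 ∈ lcsIdeal K R (k + j + 4) :=
    mem_lcsIdeal K _ (1) (1) _ (lc_le K _ _ (by omega) (comm_mem' K ha (comm_mem' K (comm_mem' K hc (comm_mem' K (mem_L_one K (x)) (mem_L_one K (z)))) (mem_L_one K (y)))))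
  have h20 : 1 * (a * (c * ((x*y) * z - z * (x*y)) - ((x*y) * z - z * (x*y)) * c) - (c * ((x*y) * z - z * (x*y)) - ((x*y) * z - z * (x*y)) * c) * a) * 1 ∈ lcsIdeal K R (k + j + 4) :=
    mem_lcsIdeal K _ (1) (1) _ (lc_le K _ _ (by omega) (comm_mem' K ha (comm_mem' K hc (comm_mem' K (mem_L_one K (x*y)) (mem_L_one K (z))))))
  have h21 : 1 * (a * ((c * (x*y) - (x*y) * c) * z - z * (c * (x*y) - (x*y) * c)) - ((c * (x*y) - (x*y) * c) * z - z * (c * (x*y) - (x*y) * c)) * a) * 1 ∈ lcsIdeal K R (k + j + 4) :=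
    mem_lcsIdeal K _ (1) (1) _ (lc_le K _ _ (by omega) (comm_mem' K ha (comm_mem' K (comm_mem' K hc (mem_L_one K (x*y))) (mem_L_one K (z)))))
  have h22 : 1 * (a * (c * (y * (x*z) - (x*z) * y) - (y * (x*z) - (x*z) * y) * c) - (c * (y * (x*z) - (x*z) * y) - (y * (x*z) - (x*z) * y) * c) * a) * 1 ∈ lcsIdeal K R (k + j + 4) :=
    mem_lcsIdeal K _ (1) (1) _ (lc_le K _ _ (by omega) (comm_mem' K ha (comm_mem' K hc (comm_mem' K (mem_L_one K (y)) (mem_L_one K (x*z))))))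
  have h23 : 1 * (a * ((c * x - x * c) * (y*z) - (y*z) * (c * x - x * c)) - ((c * x - x * c) * (y*z) - (y*z) * (c * x - x * c)) * a) * 1 ∈ lcsIdeal K R (k + j + 4) :=
    mem_lcsIdeal K _ (1) (1) _ (lc_le K _ _ (by omega) (comm_mem' K ha (comm_mem' K (comm_mem' K hc (mem_L_one K (x))) (mem_L_one K (y*z)))))
  have h24 : 1 * (a * (c * (x*y*z) - (x*y*z) * c) - (c * (x*y*z) - (x*y*z) * c) * a) * 1 ∈ lcsIdeal K R (k + j + 4) :=
    mem_lcsIdeal K _ (1) (1) _ (lc_le K _ _ (by omega) (comm_mem' K ha (comm_mem' K hc (mem_L_one K (x*y*z)))))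
  have h25 : ((a * x - x * a) * y - y * (a * x - x * a)) * (c * z - z * c) ∈ lcsIdeal K R (k + j + 4) :=
    hIH _ _ (lc_le K _ _ (by omega) (comm_mem' K (comm_mem' K ha (mem_L_one K x)) (mem_L_one K y)))
      (lc_le K _ _ (by omega) (comm_mem' K hc (mem_L_one K z)))
  have h26 : (a * (x * z - z * x) - (x * z - z * x) * a) * (c * y - y * c) ∈ lcsIdeal K R (k + j + 4) :=
    hIH _ _ (lc_le K _ _ (by omega) (comm_mem' K ha (comm_mem' K (mem_L_one K x) (mem_L_one K z))))
      (lc_le K _ _ (by omega) (comm_mem' K hc (mem_L_one K y)))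
  have hu3 : x * a - a * x ∈ lowerCentral K R (k + 3) :=
    Submodule.subset_span ⟨x, a, ha, rfl⟩
  have hV3 : y * (z * c - c * z) - (z * c - c * z) * y ∈ lowerCentral K R (j + 3) :=
    Submodule.subset_span ⟨y, z * c - c * z, Submodule.subset_span ⟨z, c, hc, rfl⟩, rfl⟩
  have hV2 : y * (z * c - c * z) - (z * c - c * z) * y ∈ lowerCentral K R (j + 2) :=
    lc_succ_le K (j + 2) hV3
  have hterm1 : ((x * a - a * x) * e - e * (x * a - a * x)) *
      (y * (z * c - c * z) - (z * c - c * z) * y) ∈ lcsIdeal K R (k + j + 4) :=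
    hIH _ _ (lc_le K _ _ (by omega) (comm_mem_one K hu3 e)) hV2
  have hcert : (x * a - a * x) * (y * (z * c - c * z) - (z * c - c * z) * y) =
      z * (a * (c * x - x * c) - (c * x - x * c) * a) * y
      + z * (a * (c * y - y * c) - (c * y - y * c) * a) * x
      - z * x * (a * (c * y - y * c) - (c * y - y * c) * a) * 1
      + x * z * (a * (c * y - y * c) - (c * y - y * c) * a) * 1
      + x * (a * (c * z - z * c) - (c * z - z * c) * a) * y
      + y * (a * (c * z - z * c) - (c * z - z * c) * a) * x
      - y * x * (a * (c * z - z * c) - (c * z - z * c) * a) * 1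
      + z * (a * (c * (x * y - y * x) - (x * y - y * x) * c) - (c * (x * y - y * x) - (x * y - y * x) * c) * a) * 1
      - z * (a * ((c * x - x * c) * y - y * (c * x - x * c)) - ((c * x - x * c) * y - y * (c * x - x * c)) * a) * 1
      - z * (a * (c * (x*y) - (x*y) * c) - (c * (x*y) - (x*y) * c) * a) * 1
      + y * (a * (c * (x * z - z * x) - (x * z - z * x) * c) - (c * (x * z - z * x) - (x * z - z * x) * c) * a) * 1
      - y * (a * ((c * x - x * c) * z - z * (c * x - x * c)) - ((c * x - x * c) * z - z * (c * x - x * c)) * a) * 1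
      + 1 * (a * ((c * x - x * c) * z - z * (c * x - x * c)) - ((c * x - x * c) * z - z * (c * x - x * c)) * a) * y
      - 1 * (a * (c * (x*z) - (x*z) * c) - (c * (x*z) - (x*z) * c) * a) * y
      + 1 * (a * ((c * y - y * c) * z - z * (c * y - y * c)) - ((c * y - y * c) * z - z * (c * y - y * c)) * a) * x
      - 1 * (a * (c * (y*z) - (y*z) * c) - (c * (y*z) - (y*z) * c) * a) * x
      + 1 * (a * ((c * (x * y - y * x) - (x * y - y * x) * c) * z - z * (c * (x * y - y * x) - (x * y - y * x) * c)) - ((c * (x * y - y * x) - (x * y - y * x) * c) * z - z * (c * (x * y - y * x) - (x * y - y * x) * c)) * a) * 1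
      - 1 * (a * (((c * x - x * c) * y - y * (c * x - x * c)) * z - z * ((c * x - x * c) * y - y * (c * x - x * c))) - (((c * x - x * c) * y - y * (c * x - x * c)) * z - z * ((c * x - x * c) * y - y * (c * x - x * c))) * a) * 1
      + 1 * (a * ((c * (x * z - z * x) - (x * z - z * x) * c) * y - y * (c * (x * z - z * x) - (x * z - z * x) * c)) - ((c * (x * z - z * x) - (x * z - z * x) * c) * y - y * (c * (x * z - z * x) - (x * z - z * x) * c)) * a) * 1
      - 1 * (a * (c * ((x*y) * z - z * (x*y)) - ((x*y) * z - z * (x*y)) * c) - (c * ((x*y) * z - z * (x*y)) - ((x*y) * z - z * (x*y)) * c) * a) * 1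
      - 1 * (a * ((c * (x*y) - (x*y) * c) * z - z * (c * (x*y) - (x*y) * c)) - ((c * (x*y) - (x*y) * c) * z - z * (c * (x*y) - (x*y) * c)) * a) * 1
      + 1 * (a * (c * (y * (x*z) - (x*z) * y) - (y * (x*z) - (x*z) * y) * c) - (c * (y * (x*z) - (x*z) * y) - (y * (x*z) - (x*z) * y) * c) * a) * 1
      + 1 * (a * ((c * x - x * c) * (y*z) - (y*z) * (c * x - x * c)) - ((c * x - x * c) * (y*z) - (y*z) * (c * x - x * c)) * a) * 1
      + 1 * (a * (c * (x*y*z) - (x*y*z) * c) - (c * (x*y*z) - (x*y*z) * c) * a) * 1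
      + ((a * x - x * a) * y - y * (a * x - x * a)) * (c * z - z * c)
      + (a * (x * z - z * x) - (x * z - z * x) * a) * (c * y - y * c) := by noncomm_ring
  have hsum : z * (a * (c * x - x * c) - (c * x - x * c) * a) * y
      + z * (a * (c * y - y * c) - (c * y - y * c) * a) * x
      - z * x * (a * (c * y - y * c) - (c * y - y * c) * a) * 1
      + x * z * (a * (c * y - y * c) - (c * y - y * c) * a) * 1
      + x * (a * (c * z - z * c) - (c * z - z * c) * a) * y
      + y * (a * (c * z - z * c) - (c * z - z * c) * a) * x
      - y * x * (a * (c * z - z * c) - (c * z - z * c) * a) * 1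
      + z * (a * (c * (x * y - y * x) - (x * y - y * x) * c) - (c * (x * y - y * x) - (x * y - y * x) * c) * a) * 1
      - z * (a * ((c * x - x * c) * y - y * (c * x - x * c)) - ((c * x - x * c) * y - y * (c * x - x * c)) * a) * 1
      - z * (a * (c * (x*y) - (x*y) * c) - (c * (x*y) - (x*y) * c) * a) * 1
      + y * (a * (c * (x * z - z * x) - (x * z - z * x) * c) - (c * (x * z - z * x) - (x * z - z * x) * c) * a) * 1
      - y * (a * ((c * x - x * c) * z - z * (c * x - x * c)) - ((c * x - x * c) * z - z * (c * x - x * c)) * a) * 1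
      + 1 * (a * ((c * x - x * c) * z - z * (c * x - x * c)) - ((c * x - x * c) * z - z * (c * x - x * c)) * a) * y
      - 1 * (a * (c * (x*z) - (x*z) * c) - (c * (x*z) - (x*z) * c) * a) * y
      + 1 * (a * ((c * y - y * c) * z - z * (c * y - y * c)) - ((c * y - y * c) * z - z * (c * y - y * c)) * a) * x
      - 1 * (a * (c * (y*z) - (y*z) * c) - (c * (y*z) - (y*z) * c) * a) * x
      + 1 * (a * ((c * (x * y - y * x) - (x * y - y * x) * c) * z - z * (c * (x * y - y * x) - (x * y - y * x) * c)) - ((c * (x * y - y * x) - (x * y - y * x) * c) * z - z * (c * (x * y - y * x) - (x * y - y * x) * c)) * a) * 1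
      - 1 * (a * (((c * x - x * c) * y - y * (c * x - x * c)) * z - z * ((c * x - x * c) * y - y * (c * x - x * c))) - (((c * x - x * c) * y - y * (c * x - x * c)) * z - z * ((c * x - x * c) * y - y * (c * x - x * c))) * a) * 1
      + 1 * (a * ((c * (x * z - z * x) - (x * z - z * x) * c) * y - y * (c * (x * z - z * x) - (x * z - z * x) * c)) - ((c * (x * z - z * x) - (x * z - z * x) * c) * y - y * (c * (x * z - z * x) - (x * z - z * x) * c)) * a) * 1
      - 1 * (a * (c * ((x*y) * z - z * (x*y)) - ((x*y) * z - z * (x*y)) * c) - (c * ((x*y) * z - z * (x*y)) - ((x*y) * z - z * (x*y)) * c) * a) * 1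
      - 1 * (a * ((c * (x*y) - (x*y) * c) * z - z * (c * (x*y) - (x*y) * c)) - ((c * (x*y) - (x*y) * c) * z - z * (c * (x*y) - (x*y) * c)) * a) * 1
      + 1 * (a * (c * (y * (x*z) - (x*z) * y) - (y * (x*z) - (x*z) * y) * c) - (c * (y * (x*z) - (x*z) * y) - (y * (x*z) - (x*z) * y) * c) * a) * 1
      + 1 * (a * ((c * x - x * c) * (y*z) - (y*z) * (c * x - x * c)) - ((c * x - x * c) * (y*z) - (y*z) * (c * x - x * c)) * a) * 1
      + 1 * (a * (c * (x*y*z) - (x*y*z) * c) - (c * (x*y*z) - (x*y*z) * c) * a) * 1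
      + ((a * x - x * a) * y - y * (a * x - x * a)) * (c * z - z * c)
      + (a * (x * z - z * x) - (x * z - z * x) * a) * (c * y - y * c) ∈ lcsIdeal K R (k + j + 4) :=
    add_mem (add_mem (add_mem (add_mem (add_mem (sub_mem (sub_mem (add_mem (sub_mem (add_mem (sub_mem (add_mem (sub_mem (add_mem (sub_mem (add_mem (sub_mem (sub_mem (add_mem (sub_mem (add_mem (add_mem (add_mem (sub_mem (add_mem (h1) h2) h3) h4) h5) h6) h7) h8) h9) h10) h11) h12) h13) h14) h15) h16) h17) h18) h19) h20) h21) h22) h23) h24) h25) h26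
  have hterm2 : (x * a - a * x) * (y * (z * c - c * z) - (z * c - c * z) * y) ∈
      lcsIdeal K R (k + j + 4) := by rw [hcert]; exact hsum
  have hsplit : (x * a - a * x) * e * (y * (z * c - c * z) - (z * c - c * z) * y) =
      e * ((x * a - a * x) * (y * (z * c - c * z) - (z * c - c * z) * y)) +
        ((x * a - a * x) * e - e * (x * a - a * x)) *
          (y * (z * c - c * z) - (z * c - c * z) * y) := by noncomm_ring
  rw [hsplit]
  exact add_mem (lcsIdeal_mul_left K _ e _ hterm2) hterm1

end GuptaLevin

/-- Latyshev; Gupta–Levin: for all `m, l ≥ 2` and `n ≥ 1`,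
`M_m(A_n) · M_l(A_n) ⊆ M_{m+l-2}(A_n)`. -/
theorem latyshev_gupta_levin
    (K : Type*) [Field K] [CharZero K]
    (n : ℕ) (hn : 1 ≤ n) (m l : ℕ) (hm : 2 ≤ m) (hl : 2 ≤ l) :
    lcsIdeal K (FreeAlgebra K (Fin n)) m * lcsIdeal K (FreeAlgebra K (Fin n)) l ≤
      lcsIdeal K (FreeAlgebra K (Fin n)) (m + l - 2) := by
  set R := FreeAlgebra K (Fin n)
  rw [Submodule.mul_le]
  intro X hX Y hY
  have hX' : X ∈ Submodule.span K
      {w : R | ∃ a b : R, ∃ u ∈ lowerCentral K R m, w = a * u * b} := hX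
  clear hX
  induction hX' using Submodule.span_induction with
  | zero => rw [zero_mul]; exact zero_mem _
  | add p1 p2 _ _ ih1 ih2 => rw [add_mul]; exact add_mem ih1 ih2
  | smul t p1 _ ih1 => rw [smul_mul_assoc]; exact Submodule.smul_mem _ t ih1
  | mem Xg hXg =>
  obtain ⟨a, b, u, hu, rfl⟩ := hXg
  have hY' : Y ∈ Submodule.span K
      {w : R | ∃ a b : R, ∃ v ∈ lowerCentral K R l, w = a * v * b} := hY
  clear hY
  induction hY' using Submodule.span_induction with
  | zero => rw [mul_zero]; exact zero_mem _
  | add p1 p2 _ _ ih1 ih2 => rw [mul_add]; exact add_mem ih1 ih2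
  | smul t p1 _ ih1 => rw [mul_smul_comm]; exact Submodule.smul_mem _ t ih1
  | mem Yg hYg =>
  obtain ⟨d, f, v, hv, rfl⟩ := hYg
  have hkey := key_lemma K l m u (b * d) v hu hv
  have hEq : a * u * b * (d * v * f) = a * (u * (b * d) * v) * f := by noncomm_ring
  rw [hEq]
  exact lcsIdeal_mul_right K _ _ f (lcsIdeal_mul_left K _ a _ hkey)
end

section
/- For every odd integer l ≥ 1, every integer k ≥ 1, and every n ≥ 1, the K-span of all brackets ⁅m, c⁆ with m ∈ M_l(A_n) and c ∈ L_k(A_n) is contained in L_{k+l}(A_n). (That is, [M_l(A_n), L_k(A_n)] ⊆ L_{k+l}(A_n).) -/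
/-- Commutator bracket. -/
def cb {R : Type*} [Ring R] (x y : R) : R := x * y - y * x

set_option maxHeartbeats 1000000 in
/-- The key 70-term identity: `3⁅a⁅p,⁅r,s⁆⁆, c⁆` is a sum of terms
`±⁅w₁,⁅w₂,⁅u·s·v, x⁆⁆⁆`. -/
theorem magic {R : Type*} [Ring R] (a p r s c : R) :
    cb (a * cb p (cb r s)) c + cb (a * cb p (cb r s)) c + cb (a * cb p (cb r s)) c =
      cb p (cb (c * r) (cb (1 * s * 1) a)) +
      cb p (cb (c * r) (cb (1 * s * 1) a)) +
      cb r (cb (p * c) (cb (1 * s * 1) a)) +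
      cb r (cb (p * c) (cb (1 * s * 1) a)) +
      cb r (cb (p * c) (cb (1 * s * 1) a)) +
      (-cb r (cb (c * p) (cb (1 * s * 1) a))) +
      cb c (cb (p * r) (cb (1 * s * 1) a)) +
      cb (p * r) (cb c (cb (1 * s * 1) a)) +
      (-cb (r * p) (cb c (cb (1 * s * 1) a))) +
      (-cb (r * p) (cb c (cb (1 * s * 1) a))) +
      (-cb (r * p) (cb c (cb (1 * s * 1) a))) +
      (-cb (c * p) (cb r (cb (1 * s * 1) a))) +
      (-cb a (cb (r * c) (cb (1 * s * 1) p))) +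
      (-cb a (cb (c * r) (cb (1 * s * 1) p))) +
      (-cb r (cb (a * c) (cb (1 * s * 1) p))) +
      cb r (cb (c * a) (cb (1 * s * 1) p)) +
      cb (a * r) (cb c (cb (1 * s * 1) p)) +
      cb (r * a) (cb c (cb (1 * s * 1) p)) +
      cb (a * c) (cb r (cb (1 * s * 1) p)) +
      (-cb a (cb (p * c) (cb (1 * s * 1) r))) +
      (-cb a (cb (p * c) (cb (1 * s * 1) r))) +
      (-cb a (cb (p * c) (cb (1 * s * 1) r))) +
      cb a (cb (c * p) (cb (1 * s * 1) r)) +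
      cb p (cb (a * c) (cb (1 * s * 1) r)) +
      cb p (cb (a * c) (cb (1 * s * 1) r)) +
      (-cb p (cb (c * a) (cb (1 * s * 1) r))) +
      (-cb p (cb (c * a) (cb (1 * s * 1) r))) +
      cb c (cb (p * a) (cb (1 * s * 1) r)) +
      cb (a * p) (cb c (cb (1 * s * 1) r)) +
      cb (a * p) (cb c (cb (1 * s * 1) r)) +
      cb (a * p) (cb c (cb (1 * s * 1) r)) +
      (-cb (p * a) (cb c (cb (1 * s * 1) r))) +
      (-cb (p * a) (cb c (cb (1 * s * 1) r))) +
      (-cb (a * c) (cb p (cb (1 * s * 1) r))) +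
      cb (c * a) (cb p (cb (1 * s * 1) r)) +
      cb (c * a) (cb p (cb (1 * s * 1) r)) +
      cb (c * a) (cb p (cb (1 * s * 1) r)) +
      cb a (cb (r * p) (cb (1 * s * 1) c)) +
      cb p (cb (a * r) (cb (1 * s * 1) c)) +
      cb r (cb (p * a) (cb (1 * s * 1) c)) +
      cb r (cb (p * a) (cb (1 * s * 1) c)) +
      (-cb (p * a) (cb r (cb (1 * s * 1) c))) +
      (-cb (a * r) (cb p (cb (1 * s * 1) c))) +
      (-cb (a * r) (cb p (cb (1 * s * 1) c))) +
      (-cb r (cb c (cb (1 * s * 1) (a * p)))) +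
      cb r (cb c (cb (1 * s * 1) (p * a))) +
      cb p (cb c (cb (1 * s * 1) (a * r))) +
      cb p (cb c (cb (1 * s * 1) (a * r))) +
      (-cb c (cb p (cb (1 * s * 1) (a * r)))) +
      (-cb p (cb c (cb (1 * s * 1) (r * a)))) +
      (-cb p (cb c (cb (1 * s * 1) (r * a)))) +
      (-cb r (cb p (cb (1 * s * 1) (a * c)))) +
      (-cb r (cb p (cb (1 * s * 1) (a * c)))) +
      (-cb p (cb r (cb (1 * s * 1) (c * a)))) +
      cb a (cb r (cb (1 * s * 1) (p * c))) +
      (-cb r (cb c (cb (1 * s * a) p))) +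
      (-cb r (cb c (cb (1 * s * a) p))) +
      (-cb c (cb r (cb (1 * s * a) p))) +
      (-cb p (cb c (cb (1 * s * a) r))) +
      cb c (cb p (cb (1 * s * a) r)) +
      cb p (cb r (cb (1 * s * a) c)) +
      cb r (cb p (cb (1 * s * a) c)) +
      cb r (cb p (cb (1 * s * a) c)) +
      cb a (cb c (cb (1 * s * p) r)) +
      (-cb c (cb a (cb (1 * s * p) r))) +
      (-cb a (cb r (cb (1 * s * p) c))) +
      (-cb r (cb a (cb (1 * s * p) c))) +
      (-cb r (cb a (cb (1 * s * p) c))) +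
      cb a (cb p (cb (1 * s * r) c)) +
      (-cb p (cb a (cb (1 * s * r) c))) := by
  simp only [cb]
  noncomm_ring

section Infra

variable {K : Type*} [Field K] [CharZero K] {R : Type*} [Ring R] [Algebra K R]

theorem lc_zero : lowerCentral K R 0 = ⊤ := rfl

theorem lc_one : lowerCentral K R 1 = ⊤ := rfl

theorem lc_succ_succ (i : ℕ) :
    lowerCentral K R (i + 2) = Submodule.span K
      {x : R | ∃ a : R, ∃ l ∈ lowerCentral K R (i + 1), x = a * l - l * a} := by
  rw [lowerCentral]

theorem lcsIdeal_def (i : ℕ) :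
    lcsIdeal K R i = Submodule.span K
      {x : R | ∃ a b : R, ∃ l ∈ lowerCentral K R i, x = a * l * b} := rfl

theorem mem_lc_of_eq_one {i : ℕ} (h : i = 1) (x : R) : x ∈ lowerCentral K R i := by
  subst h; rw [lc_one]; trivial

theorem mapLin {s : Set R} {S : Submodule K R} (f : R →ₗ[K] R)
    (h : ∀ x ∈ s, f x ∈ S) {x : R} (hx : x ∈ Submodule.span K s) : f x ∈ S := by
  have hmem : f x ∈ Submodule.map f (Submodule.span K s) := Submodule.mem_map_of_mem hx
  rw [Submodule.map_span] at hmem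
  refine Submodule.span_le.mpr ?_ hmem
  rintro _ ⟨y, hy, rfl⟩
  exact h y hy

theorem third_mem {S : Submodule K R} {x : R} (h : x + x + x ∈ S) : x ∈ S := by
  have h3 : (3 : K) • x = x + x + x := by
    rw [show (3 : K) = 1 + 1 + 1 by norm_num, add_smul, add_smul, one_smul]
  have h' : (3 : K) • x ∈ S := by rw [h3]; exact h
  have := S.smul_mem (3 : K)⁻¹ h'
  rwa [inv_smul_smul₀ (by norm_num : (3 : K) ≠ 0)] at this

theorem bracket_mem_lc (i : ℕ) (a : R) {x : R} (hx : x ∈ lowerCentral K R i) :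
    a * x - x * a ∈ lowerCentral K R (i + 1) := by
  cases i with
  | zero => rw [lc_one]; trivial
  | succ i =>
    rw [lc_succ_succ]
    exact Submodule.subset_span ⟨a, x, hx, rfl⟩

theorem lc_mul_comm (i : ℕ) : ∀ (j : ℕ) {x y : R}, x ∈ lowerCentral K R (i + 1) →
    y ∈ lowerCentral K R j → x * y - y * x ∈ lowerCentral K R (i + 1 + j) := by
  induction i with
  | zero =>
    intro j x y _ hy
    have h := bracket_mem_lc j x hy
    rwa [show j + 1 = 0 + 1 + j by omega] at h
  | succ i ih =>
    intro j x y hx hy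
    rw [lc_succ_succ] at hx
    have h1 : (LinearMap.mulRight K y - LinearMap.mulLeft K y) x ∈
        lowerCentral K R (i + 1 + 1 + j) := by
      refine mapLin _ ?_ hx
      rintro z ⟨a, l, hl, rfl⟩
      have h2 : l * y - y * l ∈ lowerCentral K R (i + 1 + j) := ih j hl hy
      have h3 : a * (l * y - y * l) - (l * y - y * l) * a ∈
          lowerCentral K R (i + 1 + j + 1) := bracket_mem_lc _ a h2
      have h4 : a * y - y * a ∈ lowerCentral K R (j + 1) := bracket_mem_lc j a hy
      have h5 : l * (a * y - y * a) - (a * y - y * a) * l ∈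
          lowerCentral K R (i + 1 + (j + 1)) := ih (j + 1) hl h4
      rw [show i + 1 + j + 1 = i + 1 + 1 + j by omega] at h3
      rw [show i + 1 + (j + 1) = i + 1 + 1 + j by omega] at h5
      have e : (LinearMap.mulRight K y - LinearMap.mulLeft K y) (a * l - l * a) =
          (a * (l * y - y * l) - (l * y - y * l) * a) -
            (l * (a * y - y * a) - (a * y - y * a) * l) := by
        simp only [LinearMap.sub_apply, LinearMap.mulRight_apply, LinearMap.mulLeft_apply]
        all_goals noncomm_ring
      rw [e]
      exact sub_mem h3 h5
    simpa only [LinearMap.sub_apply, LinearMap.mulRight_apply, LinearMap.mulLeft_apply]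
      using h1

theorem stepP (l' : ℕ)
    (IH : ∀ k : ℕ, ∀ m ∈ lcsIdeal K R (l' + 1), ∀ c ∈ lowerCentral K R (k + 1),
      m * c - c * m ∈ lowerCentral K R (l' + 1 + k + 1)) :
    ∀ k : ℕ, ∀ m ∈ lcsIdeal K R (l' + 3), ∀ c ∈ lowerCentral K R (k + 1),
      m * c - c * m ∈ lowerCentral K R (l' + 3 + k + 1) := by
  have key : ∀ u v y₁ y₂ t σ : R, σ ∈ lowerCentral K R (l' + 1) →
      cb y₁ (cb y₂ (cb (u * σ * v) t)) ∈ lowerCentral K R (l' + 4) := by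
    intro u v y₁ y₂ t σ hσ
    have hM : u * σ * v ∈ lcsIdeal K R (l' + 1) :=
      Submodule.subset_span ⟨u, v, σ, hσ, rfl⟩
    have h1 : (u * σ * v) * t - t * (u * σ * v) ∈ lowerCentral K R (l' + 1 + 0 + 1) :=
      IH 0 _ hM t (mem_lc_of_eq_one rfl t)
    have h2 := bracket_mem_lc _ y₂ h1
    have h3 := bracket_mem_lc _ y₁ h2
    simp only [cb]
    rwa [show l' + 1 + 0 + 1 + 1 + 1 = l' + 4 by omega] at h3
  have AL : ∀ (x y : R), ∀ μ ∈ lowerCentral K R (l' + 3),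
      (x * μ) * y - y * (x * μ) ∈ lowerCentral K R (l' + 4) := by
    intro x y μ hμ
    rw [show l' + 3 = l' + 1 + 2 by omega, lc_succ_succ] at hμ
    have hf1 : ((LinearMap.mulRight K y - LinearMap.mulLeft K y).comp
        (LinearMap.mulLeft K x)) μ ∈ lowerCentral K R (l' + 4) := by
      refine mapLin _ ?_ hμ
      rintro z ⟨p, q, hq, rfl⟩
      rw [show l' + 1 + 1 = l' + 2 by omega, lc_succ_succ] at hq
      have hg1 : (((LinearMap.mulRight K y - LinearMap.mulLeft K y).comp
          (LinearMap.mulLeft K x)).comp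
            (LinearMap.mulLeft K p - LinearMap.mulRight K p)) q ∈
          lowerCentral K R (l' + 4) := by
        refine mapLin _ ?_ hq
        rintro w ⟨r, σ, hσ, rfl⟩
        have hXmem : cb (x * cb p (cb r σ)) y ∈ lowerCentral K R (l' + 4) := by
          refine third_mem ?_
          rw [magic x p r σ y]
          exact (add_mem (add_mem (add_mem (add_mem (add_mem (add_mem (add_mem (add_mem (add_mem (add_mem (add_mem (add_mem (add_mem (add_mem (add_mem (add_mem (add_mem (add_mem (add_mem (add_mem (add_mem (add_mem (add_mem (add_mem (add_mem (add_mem (add_mem (add_mem (add_mem (add_mem (add_mem (add_mem (add_mem (add_mem (add_mem (add_mem (add_mem (add_mem (add_mem (add_mem (add_mem (add_mem (add_mem (add_mem (add_mem (add_mem (add_mem (add_mem (add_mem (add_mem (add_mem (add_mem (add_mem (add_mem (add_mem (add_mem (add_mem (add_mem (add_mem (add_mem (add_mem (add_mem (add_mem (add_mem (add_mem (add_mem (add_mem (add_mem (add_mem (key 1 1 p (y * r) x σ hσ) (key 1 1 p (y * r) x σ hσ)) (key 1 1 r (p * y) x σ hσ)) (key 1 1 r (p * y) x σ hσ)) (key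 1 1 r (p * y) x σ hσ)) (neg_mem (key 1 1 r (y * p) x σ hσ))) (key 1 1 y (p * r) x σ hσ)) (key 1 1 (p * r) y x σ hσ)) (neg_mem (key 1 1 (r * p) y x σ hσ))) (neg_mem (key 1 1 (r * p) y x σ hσ))) (neg_mem (key 1 1 (r * p) y x σ hσ))) (neg_mem (key 1 1 (y * p) r x σ hσ))) (neg_mem (key 1 1 x (r * y) p σ hσ))) (neg_mem (key 1 1 x (y * r) p σ hσ))) (neg_mem (key 1 1 r (x * y) p σ hσ))) (key 1 1 r (y * x) p σ hσ)) (key 1 1 (x * r) y p σ hσ)) (key 1 1 (r * x) y p σ hσ)) (key 1 1 (x * y) r p σ hσ)) (neg_mem (key 1 1 x (p * y) r σ hσ))) (neg_mem (key 1 1 x (p * y) r σ hσ))) (neg_mem (key 1 1 x (p * y) r σ hσ))) (key 1 1 x (y * p) r σ hσ)) (key 1 1 p (x * y) r σ hσ)) (key 1 1 p (x * y) r σ hσ)) (neg_mem (key 1 1 p (y * x) r σ hσ))) (neg_mem (key 1 1 p (y * x) r σ hσ))) (key 1 1 y (p * x) r σ hσ)) (key 1 1 (x * p) y r σ hσ))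 (key 1 1 (x * p) y r σ hσ)) (key 1 1 (x * p) y r σ hσ)) (neg_mem (key 1 1 (p * x) y r σ hσ))) (neg_mem (key 1 1 (p * x) y r σ hσ))) (neg_mem (key 1 1 (x * y) p r σ hσ))) (key 1 1 (y * x) p r σ hσ)) (key 1 1 (y * x) p r σ hσ)) (key 1 1 (y * x) p r σ hσ)) (key 1 1 x (r * p) y σ hσ)) (key 1 1 p (x * r) y σ hσ)) (key 1 1 r (p * x) y σ hσ)) (key 1 1 r (p * x) y σ hσ)) (neg_mem (key 1 1 (p * x) r y σ hσ))) (neg_mem (key 1 1 (x * r) p y σ hσ))) (neg_mem (key 1 1 (x * r) p y σ hσ))) (neg_mem (key 1 1 r y (x * p) σ hσ))) (key 1 1 r y (p * x) σ hσ)) (key 1 1 p y (x * r) σ hσ)) (key 1 1 p y (x * r) σ hσ)) (neg_mem (key 1 1 y p (x * r) σ hσ))) (neg_mem (key 1 1 p y (r * x) σ hσ))) (neg_mem (key 1 1 p y (r * x) σ hσ))) (neg_mem (key 1 1 r p (x * y) σ hσ))) (neg_mem (key 1 1 r p (x * y) σ hσ))) (neg_mem (key 1 1 p r (y * x) σ hσ)))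 (key 1 1 x r (p * y) σ hσ)) (neg_mem (key 1 x r y p σ hσ))) (neg_mem (key 1 x r y p σ hσ))) (neg_mem (key 1 x y r p σ hσ))) (neg_mem (key 1 x p y r σ hσ))) (key 1 x y p r σ hσ)) (key 1 x p r y σ hσ)) (key 1 x r p y σ hσ)) (key 1 x r p y σ hσ)) (key 1 p x y r σ hσ)) (neg_mem (key 1 p y x r σ hσ))) (neg_mem (key 1 p x r y σ hσ))) (neg_mem (key 1 p r x y σ hσ))) (neg_mem (key 1 p r x y σ hσ))) (key 1 r x p y σ hσ)) (neg_mem (key 1 r p x y σ hσ)))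
        have e : (((LinearMap.mulRight K y - LinearMap.mulLeft K y).comp
            (LinearMap.mulLeft K x)).comp
              (LinearMap.mulLeft K p - LinearMap.mulRight K p)) (r * σ - σ * r) =
            cb (x * cb p (cb r σ)) y := by
          simp only [cb, LinearMap.comp_apply, LinearMap.sub_apply,
            LinearMap.mulLeft_apply, LinearMap.mulRight_apply]
          all_goals noncomm_ring
        rw [e]
        exact hXmem
      have e1 : (((LinearMap.mulRight K y - LinearMap.mulLeft K y).comp
          (LinearMap.mulLeft K x)).comp
            (LinearMap.mulLeft K p - LinearMap.mulRight K p)) q =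
          ((LinearMap.mulRight K y - LinearMap.mulLeft K y).comp
            (LinearMap.mulLeft K x)) (p * q - q * p) := by
        simp only [LinearMap.comp_apply, LinearMap.sub_apply,
          LinearMap.mulLeft_apply, LinearMap.mulRight_apply]
      rwa [e1] at hg1
    simpa only [LinearMap.comp_apply, LinearMap.sub_apply,
      LinearMap.mulLeft_apply, LinearMap.mulRight_apply] using hf1
  have base : ∀ m ∈ lcsIdeal K R (l' + 3), ∀ t : R,
      m * t - t * m ∈ lowerCentral K R (l' + 4) := by
    intro m hm t
    rw [lcsIdeal_def] at hm
    have h1 : (LinearMap.mulRight K t - LinearMap.mulLeft K t) m ∈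
        lowerCentral K R (l' + 4) := by
      refine mapLin _ ?_ hm
      rintro z ⟨a, b, μ, hμ, rfl⟩
      have e : (LinearMap.mulRight K t - LinearMap.mulLeft K t) (a * μ * b) =
          ((a * μ) * (b * t) - (b * t) * (a * μ)) -
            (((t * a) * μ) * b - b * ((t * a) * μ)) := by
        simp only [LinearMap.sub_apply, LinearMap.mulRight_apply, LinearMap.mulLeft_apply]
        all_goals noncomm_ring
      rw [e]
      exact sub_mem (AL a (b * t) μ hμ) (AL (t * a) b μ hμ)
    simpa only [LinearMap.sub_apply, LinearMap.mulRight_apply, LinearMap.mulLeft_apply]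
      using h1
  intro k
  induction k with
  | zero =>
    intro m hm c _
    have h := base m hm c
    rwa [show l' + 4 = l' + 3 + 0 + 1 by omega] at h
  | succ k ihk =>
    intro m hm c hc
    rw [lc_succ_succ] at hc
    have h1 : (LinearMap.mulLeft K m - LinearMap.mulRight K m) c ∈
        lowerCentral K R (l' + 3 + (k + 1) + 1) := by
      refine mapLin _ ?_ hc
      rintro z ⟨a, c', hc', rfl⟩
      have hma : m * a - a * m ∈ lowerCentral K R (l' + 4) := base m hm a
      rw [show l' + 4 = l' + 3 + 1 by omega] at hma
      have h2 : (m * a - a * m) * c' - c' * (m * a - a * m) ∈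
          lowerCentral K R (l' + 3 + 1 + (k + 1)) := lc_mul_comm _ _ hma hc'
      have h3 : m * c' - c' * m ∈ lowerCentral K R (l' + 3 + k + 1) := ihk m hm c' hc'
      have h4 : a * (m * c' - c' * m) - (m * c' - c' * m) * a ∈
          lowerCentral K R (l' + 3 + k + 1 + 1) := bracket_mem_lc _ a h3
      rw [show l' + 3 + 1 + (k + 1) = l' + 3 + (k + 1) + 1 by omega] at h2
      rw [show l' + 3 + k + 1 + 1 = l' + 3 + (k + 1) + 1 by omega] at h4
      have e : (LinearMap.mulLeft K m - LinearMap.mulRight K m) (a * c' - c' * a) =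
          ((m * a - a * m) * c' - c' * (m * a - a * m)) +
            (a * (m * c' - c' * m) - (m * c' - c' * m) * a) := by
        simp only [LinearMap.sub_apply, LinearMap.mulLeft_apply, LinearMap.mulRight_apply]
        all_goals noncomm_ring
      rw [e]
      exact add_mem h2 h4
    simpa only [LinearMap.sub_apply, LinearMap.mulLeft_apply, LinearMap.mulRight_apply]
      using h1

theorem mainP (t : ℕ) : ∀ k : ℕ, ∀ m ∈ lcsIdeal K R (2 * t + 1),
    ∀ c ∈ lowerCentral K R (k + 1),
      m * c - c * m ∈ lowerCentral K R (2 * t + 1 + k + 1) := by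
  induction t with
  | zero =>
    intro k m _ c hc
    have h := bracket_mem_lc (k + 1) m hc
    rwa [show k + 1 + 1 = 2 * 0 + 1 + k + 1 by omega] at h
  | succ t ih =>
    intro k m hm c hc
    rw [show 2 * (t + 1) + 1 = 2 * t + 3 by omega] at hm
    have h := stepP (2 * t) ih k m hm c hc
    rwa [show 2 * t + 3 + k + 1 = 2 * (t + 1) + 1 + k + 1 by omega] at h

end Infra

/-- Bapat–Jordan: for every odd `l ≥ 1`, every `k ≥ 1` and every `n ≥ 1`,
`[M_l(A_n), L_k(A_n)] ⊆ L_{k+l}(A_n)`, i.e. the `K`-span of all brackets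
`⁅m, c⁆ = m * c - c * m` with `m ∈ M_l(A_n)` and `c ∈ L_k(A_n)` is contained in
`L_{k+l}(A_n)`. -/
theorem bapat_jordan_bracket
    (K : Type*) [Field K] [CharZero K]
    (n : ℕ) (hn : 1 ≤ n) (l k : ℕ) (hl : 1 ≤ l) (hlodd : Odd l) (hk : 1 ≤ k) :
    Submodule.span K {x : FreeAlgebra K (Fin n) |
        ∃ m ∈ lcsIdeal K (FreeAlgebra K (Fin n)) l,
          ∃ c ∈ lowerCentral K (FreeAlgebra K (Fin n)) k, x = m * c - c * m} ≤
      lowerCentral K (FreeAlgebra K (Fin n)) (k + l) := by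
  obtain ⟨t, ht⟩ := hlodd
  have hlt : l = 2 * t + 1 := by omega
  subst hlt
  refine Submodule.span_le.mpr ?_
  rintro x ⟨m, hm, c, hc, rfl⟩
  obtain ⟨k', rfl⟩ : ∃ k', k = k' + 1 := ⟨k - 1, by omega⟩
  have h := mainP t k' m hm c hc
  rwa [show 2 * t + 1 + k' + 1 = k' + 1 + (2 * t + 1) by omega] at h
end

section
/- In the free associative algebra A_3 on three generators over a field of characteristic zero, the product of ideals M_2(A_3)·M_2(A_3) is contained in M_3(A_3) but NOT contained in M_4(A_3). (That is, I(A_3, (2,2)) = 3.) -/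
/-!
Modulo `M₃`, the product `⁅a, b⁆ * ⁅c, d⁆` is skew in `(a, b)` and in `(c, d)`, symmetric under
exchanging the two commutators (their commutator lies in `L₃`), and the identity
`⁅x, z⁆⁅y, w⁆ + ⁅y, z⁆⁅x, w⁆ = ⁅x, ⁅y, zw⁆⁆ - z⁅x, ⁅y, w⁆⁆ - ⁅x, ⁅y, z⁆⁆w` makes it skew in `(a, c)`
as well; since `2` is invertible it vanishes as soon as two arguments coincide. It also satisfies
the Leibniz rule in each argument modulo `M₃`, so in a free algebra it suffices to check it on
generators, and with at most three generators two of the four arguments coincide. As `l w l'`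
differs from `w l l'` by an element of `L₃ · L₂`, this gives `M₂ M₂ ⊆ M₃`.

For `M₂ M₂ ⊄ M₄`: `M₄` is spanned by the elements `p⁅b, ⁅a, ⁅c, d⁆⁆⁆q` with `p, …, q` monomials.
The linear functional with values `-1, -2, 1` on `x₀x₁x₀x₂, x₁x₀x₀x₂, x₀x₂x₀x₁` and `0` on all other
monomials kills every such element (only degree `4` matters, a finite check), but takes the value
`1` on `⁅x₀, x₁⁆⁅x₀, x₂⁆ ∈ M₂ M₂`.
-/

open Submodule
open scoped Pointwise

section General

variable {K R : Type*} [CommRing K] [Ring R] [Algebra K R]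

theorem lie_mem_lowerCentral_add_two (a : R) {n : ℕ} {l : R}
    (hl : l ∈ lowerCentral K R (n + 1)) : ⁅a, l⁆ ∈ lowerCentral K R (n + 2) :=
  subset_span ⟨a, l, hl, rfl⟩

theorem lie_mem_lowerCentral_two (a b : R) : ⁅a, b⁆ ∈ lowerCentral K R 2 :=
  lie_mem_lowerCentral_add_two (n := 0) a (by simp [lowerCentral])

theorem mul_mul_mem_lcsIdeal (a b : R) {i : ℕ} {l : R} (hl : l ∈ lowerCentral K R i) :
    a * l * b ∈ lcsIdeal K R i :=
  subset_span ⟨a, b, l, hl, rfl⟩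

theorem lowerCentral_le_lcsIdeal (i : ℕ) : lowerCentral K R i ≤ lcsIdeal K R i :=
  fun l hl ↦ by simpa using mul_mul_mem_lcsIdeal (1 : R) 1 hl

theorem mul_mem_lcsIdeal_left (a : R) {i : ℕ} {x : R} (hx : x ∈ lcsIdeal K R i) :
    a * x ∈ lcsIdeal K R i := by
  refine (span_le (p := (lcsIdeal K R i).comap (LinearMap.mulLeft K a))).2 ?_ hx
  rintro _ ⟨p, q, l, hl, rfl⟩
  simpa only [SetLike.mem_coe, mem_comap, LinearMap.mulLeft_apply, mul_assoc] using
    mul_mul_mem_lcsIdeal (a * p) q hl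

theorem mul_mem_lcsIdeal_right (b : R) {i : ℕ} {x : R} (hx : x ∈ lcsIdeal K R i) :
    x * b ∈ lcsIdeal K R i := by
  refine (span_le (p := (lcsIdeal K R i).comap (LinearMap.mulRight K b))).2 ?_ hx
  rintro _ ⟨p, q, l, hl, rfl⟩
  simpa only [SetLike.mem_coe, mem_comap, LinearMap.mulRight_apply, mul_assoc] using
    mul_mul_mem_lcsIdeal p (q * b) hl

theorem lie_mul_lie_add_lie_mul_lie_mem_lcsIdeal_three (x y z w : R) :
    ⁅x, z⁆ * ⁅y, w⁆ + ⁅y, z⁆ * ⁅x, w⁆ ∈ lcsIdeal K R 3 := by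
  have key : ⁅x, z⁆ * ⁅y, w⁆ + ⁅y, z⁆ * ⁅x, w⁆ =
      ⁅x, ⁅y, z * w⁆⁆ - z * ⁅x, ⁅y, w⁆⁆ * 1 - 1 * ⁅x, ⁅y, z⁆⁆ * w := by
    simp only [Ring.lie_def]; noncomm_ring
  rw [key]
  refine sub_mem (sub_mem ?_ ?_) ?_
  · exact lowerCentral_le_lcsIdeal 3 (lie_mem_lowerCentral_add_two x (lie_mem_lowerCentral_two y _))
  · exact mul_mul_mem_lcsIdeal _ _ (lie_mem_lowerCentral_add_two x (lie_mem_lowerCentral_two y w))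
  · exact mul_mul_mem_lcsIdeal _ _ (lie_mem_lowerCentral_add_two x (lie_mem_lowerCentral_two y z))

theorem ring_lie_skew (a b : R) : -⁅b, a⁆ = ⁅a, b⁆ :=
  neg_sub _ _

theorem mul_mem_lcsIdeal_three_comm (x : R) {l : R} (hl : l ∈ lowerCentral K R 2)
    (h : x * l ∈ lcsIdeal K R 3) : l * x ∈ lcsIdeal K R 3 := by
  have hxl : ⁅x, l⁆ ∈ lcsIdeal K R 3 :=
    lowerCentral_le_lcsIdeal 3 (lie_mem_lowerCentral_add_two x hl)
  simpa only [Ring.lie_def, sub_sub_cancel] using sub_mem h hxl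

theorem lie_mul_lie_mem_lcsIdeal_three_comm {a b c d : R}
    (h : ⁅a, b⁆ * ⁅c, d⁆ ∈ lcsIdeal K R 3) : ⁅c, d⁆ * ⁅a, b⁆ ∈ lcsIdeal K R 3 :=
  mul_mem_lcsIdeal_three_comm _ (lie_mem_lowerCentral_two c d) h

theorem lie_mul_mul_mem_lcsIdeal_three {u v b q : R} (hq : q ∈ lowerCentral K R 2)
    (hu : ⁅u, b⁆ * q ∈ lcsIdeal K R 3) (hv : ⁅v, b⁆ * q ∈ lcsIdeal K R 3) :
    ⁅u * v, b⁆ * q ∈ lcsIdeal K R 3 := by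
  have key : ⁅u * v, b⁆ * q = u * (⁅v, b⁆ * q) + ⁅u, b⁆ * q * v + ⁅u, b⁆ * ⁅v, q⁆ * 1 := by
    simp only [Ring.lie_def]; noncomm_ring
  rw [key]
  exact add_mem (add_mem (mul_mem_lcsIdeal_left u hv) (mul_mem_lcsIdeal_right v hu))
    (mul_mul_mem_lcsIdeal _ _ (lie_mem_lowerCentral_add_two v hq))

theorem lie_mul_lie_self_mem_lcsIdeal_three [Invertible (2 : K)] (a b d : R) :
    ⁅a, b⁆ * ⁅a, d⁆ ∈ lcsIdeal K R 3 := by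
  have h := smul_mem _ (⅟2 : K) (lie_mul_lie_add_lie_mul_lie_mem_lcsIdeal_three a a b d)
  rwa [← two_smul K, smul_smul, invOf_mul_self, one_smul] at h

theorem lie_mul_lie_mem_lcsIdeal_three_of_eq [Invertible (2 : K)] {a b c d : R}
    (h : a = b ∨ c = d ∨ a = c ∨ a = d ∨ b = c ∨ b = d) :
    ⁅a, b⁆ * ⁅c, d⁆ ∈ lcsIdeal K R 3 := by
  rcases h with rfl | rfl | rfl | rfl | rfl | rfl
  · simp [Ring.lie_def]
  · simp [Ring.lie_def]
  · exact lie_mul_lie_self_mem_lcsIdeal_three a b d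
  · rw [← ring_lie_skew c a, mul_neg, neg_mem_iff]
    exact lie_mul_lie_self_mem_lcsIdeal_three a b c
  · rw [← ring_lie_skew a b, neg_mul, neg_mem_iff]
    exact lie_mul_lie_self_mem_lcsIdeal_three b a d
  · rw [← ring_lie_skew a b, ← ring_lie_skew c b, neg_mul_neg]
    exact lie_mul_lie_self_mem_lcsIdeal_three b a c

theorem lcsIdeal_two_mul_le_three (h : ∀ a b c d : R, ⁅a, b⁆ * ⁅c, d⁆ ∈ lcsIdeal K R 3) :
    lcsIdeal K R 2 * lcsIdeal K R 2 ≤ lcsIdeal K R 3 := by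
  have hL : lowerCentral K R 2 * lowerCentral K R 2 ≤ lcsIdeal K R 3 := by
    rw [lowerCentral, span_mul_span, span_le]
    rintro _ ⟨_, ⟨a, b, -, rfl⟩, _, ⟨c, d, -, rfl⟩, rfl⟩
    exact h a b c d
  rw [lcsIdeal, span_mul_span, span_le]
  rintro _ ⟨_, ⟨p, q, l, hl, rfl⟩, _, ⟨p', q', l', hl', rfl⟩, rfl⟩
  dsimp only
  -- move `q * p'` to the left of `l` at the cost of the bracket `⁅q * p', l⁆ ∈ L₃`
  have key : p * l * q * (p' * l' * q') =
      p * (q * p') * (l * l') * q' - p * ⁅q * p', l⁆ * (l' * q') := by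
    simp only [Ring.lie_def]; noncomm_ring
  rw [key]
  exact sub_mem (mul_mem_lcsIdeal_right _ (mul_mem_lcsIdeal_left _ (hL (mul_mem_mul hl hl'))))
    (mul_mul_mem_lcsIdeal _ _ (lie_mem_lowerCentral_add_two (n := 1) _ hl))

end General

namespace FreeAlgebra

variable {K X : Type*} [CommRing K]

theorem lie_mul_lie_mem_lcsIdeal_three_of_forall_ι {b c d : FreeAlgebra K X}
    (h : ∀ i : X, ⁅ι K i, b⁆ * ⁅c, d⁆ ∈ lcsIdeal K (FreeAlgebra K X) 3) (a : FreeAlgebra K X) :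
    ⁅a, b⁆ * ⁅c, d⁆ ∈ lcsIdeal K (FreeAlgebra K X) 3 := by
  induction a using FreeAlgebra.induction with
  | grade0 r => simp [Ring.lie_def, Algebra.commutes]
  | grade1 i => exact h i
  | mul u v hu hv => exact lie_mul_mul_mem_lcsIdeal_three (lie_mem_lowerCentral_two c d) hu hv
  | add u v hu hv =>
    have hadd : ⁅u + v, b⁆ = ⁅u, b⁆ + ⁅v, b⁆ := by simp only [Ring.lie_def]; noncomm_ring
    rw [hadd, add_mul]
    exact add_mem hu hv

theorem lie_mul_lie_mem_lcsIdeal_three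
    (h : ∀ i j k l : X, ⁅ι K i, ι K j⁆ * ⁅ι K k, ι K l⁆ ∈ lcsIdeal K (FreeAlgebra K X) 3)
    (a b c d : FreeAlgebra K X) : ⁅a, b⁆ * ⁅c, d⁆ ∈ lcsIdeal K (FreeAlgebra K X) 3 := by
  refine lie_mul_lie_mem_lcsIdeal_three_of_forall_ι (fun i ↦ ?_) a
  rw [← ring_lie_skew, neg_mul, neg_mem_iff]
  refine lie_mul_lie_mem_lcsIdeal_three_of_forall_ι (fun j ↦ ?_) b
  refine lie_mul_lie_mem_lcsIdeal_three_comm ?_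
  refine lie_mul_lie_mem_lcsIdeal_three_of_forall_ι (fun k ↦ ?_) c
  rw [← ring_lie_skew, neg_mul, neg_mem_iff]
  refine lie_mul_lie_mem_lcsIdeal_three_of_forall_ι (fun l ↦ ?_) d
  exact h l k j i

theorem lcsIdeal_two_mul_le_three [Invertible (2 : K)] [Fintype X] (hX : Fintype.card X ≤ 3) :
    lcsIdeal K (FreeAlgebra K X) 2 * lcsIdeal K (FreeAlgebra K X) 2 ≤
      lcsIdeal K (FreeAlgebra K X) 3 := by
  refine _root_.lcsIdeal_two_mul_le_three (lie_mul_lie_mem_lcsIdeal_three fun i j k l ↦ ?_)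
  refine lie_mul_lie_mem_lcsIdeal_three_of_eq ?_
  by_contra! hne
  have hinj : Function.Injective ![i, j, k, l] := by
    intro x y hxy
    fin_cases x <;> fin_cases y <;> simp_all [eq_comm]
  simpa using Fintype.card_le_of_injective _ hinj |>.trans hX

end FreeAlgebra

section Spanning

variable {K R : Type*} [CommRing K] [Ring R] [Algebra K R] {W : Set R}

theorem lowerCentral_add_two_le_span (hW : span K W = ⊤) {n : ℕ} {S : Set R}
    (hS : lowerCentral K R (n + 1) ≤ span K S) :
    lowerCentral K R (n + 2) ≤ span K (Set.image2 (fun a l ↦ ⁅a, l⁆) W S) := by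
  let bracket : R →ₗ[K] R →ₗ[K] R := LinearMap.mul K R - (LinearMap.mul K R).flip
  have hmap₂ : map₂ bracket (span K W) (span K S) =
      span K (Set.image2 (fun a l ↦ ⁅a, l⁆) W S) :=
    map₂_span_span K bracket W S
  rw [← hmap₂, hW]
  refine span_le.2 ?_
  rintro _ ⟨a, l, hl, rfl⟩
  exact apply_mem_map₂ bracket mem_top (hS hl)

theorem lcsIdeal_le_span (hW : span K W = ⊤) {i : ℕ} {S : Set R}
    (hS : lowerCentral K R i ≤ span K S) : lcsIdeal K R i ≤ span K (W * S * W) := by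
  rw [← span_mul_span, ← span_mul_span, hW]
  refine span_le.2 ?_
  rintro _ ⟨a, b, l, hl, rfl⟩
  exact mul_mem_mul (mul_mem_mul mem_top (hS hl)) mem_top

theorem lcsIdeal_four_le_of_span_eq_top (hW : span K W = ⊤) {N : Submodule K R}
    (h : ∀ p ∈ W, ∀ b ∈ W, ∀ a ∈ W, ∀ c ∈ W, ∀ d ∈ W, ∀ q ∈ W, p * ⁅b, ⁅a, ⁅c, d⁆⁆⁆ * q ∈ N) :
    lcsIdeal K R 4 ≤ N := by
  have h₁ : lowerCentral K R 1 ≤ span K W := by rw [hW]; exact le_top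
  have h₄ := lowerCentral_add_two_le_span (n := 2) hW <| lowerCentral_add_two_le_span hW <|
    lowerCentral_add_two_le_span hW h₁
  refine (lcsIdeal_le_span hW h₄).trans (span_le.2 ?_)
  rintro _ ⟨_, ⟨p, hp, _, ⟨b, hb, _, ⟨a, ha, _, ⟨c, hc, d, hd, rfl⟩, rfl⟩, rfl⟩, rfl⟩, q, hq, rfl⟩
  exact h p hp b hb a ha c hc d hd q hq

end Spanning

namespace FreeAlgebra

variable {K X : Type*} [CommRing K]

theorem basisFreeMonoid_apply (w : FreeMonoid X) :
    basisFreeMonoid K X w = FreeMonoid.lift (ι K) w := by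
  simp [basisFreeMonoid, equivMonoidAlgebraFreeMonoid]

theorem basisFreeMonoid_mul (v w : FreeMonoid X) :
    basisFreeMonoid K X (v * w) = basisFreeMonoid K X v * basisFreeMonoid K X w := by
  simp only [basisFreeMonoid_apply, map_mul]

theorem basisFreeMonoid_of (x : X) : basisFreeMonoid K X (FreeMonoid.of x) = ι K x := by
  simp only [basisFreeMonoid_apply, FreeMonoid.lift_eval_of]

theorem lcsIdeal_four_le_of_basisFreeMonoid {N : Submodule K (FreeAlgebra K X)}
    (h : ∀ p b a c d q : FreeMonoid X, basisFreeMonoid K X p *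
      ⁅basisFreeMonoid K X b, ⁅basisFreeMonoid K X a,
        ⁅basisFreeMonoid K X c, basisFreeMonoid K X d⁆⁆⁆ * basisFreeMonoid K X q ∈ N) :
    lcsIdeal K (FreeAlgebra K X) 4 ≤ N := by
  refine lcsIdeal_four_le_of_span_eq_top (basisFreeMonoid K X).span_eq ?_
  rintro _ ⟨p, rfl⟩ _ ⟨b, rfl⟩ _ ⟨a, rfl⟩ _ ⟨c, rfl⟩ _ ⟨d, rfl⟩ _ ⟨q, rfl⟩
  exact h p b a c d q

end FreeAlgebra

def separatingWeight (w : List (Fin 3)) : ℤ :=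
  if w = [0, 1, 0, 2] then -1 else if w = [1, 0, 0, 2] then -2 else if w = [0, 2, 0, 1] then 1
  else 0

theorem separatingWeight_eq_zero {w : List (Fin 3)} (h : w.length ≠ 4) :
    separatingWeight w = 0 := by
  unfold separatingWeight
  split_ifs <;> simp_all

-- The eight monomials are those of `P * ⁅B, ⁅A, ⁅C, D⁆⁆⁆ * Q`, with their signs.
theorem separatingWeight_nested_commutator (P B A C D Q : List (Fin 3)) :
    separatingWeight (P ++ B ++ A ++ C ++ D ++ Q) - separatingWeight (P ++ B ++ A ++ D ++ C ++ Q)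
      - separatingWeight (P ++ B ++ C ++ D ++ A ++ Q) + separatingWeight (P ++ B ++ D ++ C ++ A ++ Q)
      - separatingWeight (P ++ A ++ C ++ D ++ B ++ Q) + separatingWeight (P ++ A ++ D ++ C ++ B ++ Q)
      + separatingWeight (P ++ C ++ D ++ A ++ B ++ Q)
      - separatingWeight (P ++ D ++ C ++ A ++ B ++ Q) = 0 := by
  by_cases hnil : B = [] ∨ A = [] ∨ C = [] ∨ D = []
  · rcases hnil with rfl | rfl | rfl | rfl <;> simp only [List.append_nil] <;> ring
  simp only [not_or, ← ne_eq, ← List.length_pos_iff] at hnil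
  by_cases h4 : P.length + B.length + A.length + C.length + D.length + Q.length = 4
  · obtain rfl := List.length_eq_zero_iff.1 (show P.length = 0 by omega)
    obtain rfl := List.length_eq_zero_iff.1 (show Q.length = 0 by omega)
    obtain ⟨b, rfl⟩ := List.length_eq_one_iff.1 (show B.length = 1 by omega)
    obtain ⟨a, rfl⟩ := List.length_eq_one_iff.1 (show A.length = 1 by omega)
    obtain ⟨c, rfl⟩ := List.length_eq_one_iff.1 (show C.length = 1 by omega)
    obtain ⟨d, rfl⟩ := List.length_eq_one_iff.1 (show D.length = 1 by omega)
    revert a b c d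
    decide
  · simp (disch := simp only [List.length_append]; omega) only [separatingWeight_eq_zero]
    ring

section Separating

variable (K : Type*) [CommRing K]

noncomputable def separatingFunctional : FreeAlgebra K (Fin 3) →ₗ[K] K :=
  (FreeAlgebra.basisFreeMonoid K (Fin 3)).constr K fun w ↦ (separatingWeight w.toList : K)

variable {K}

theorem separatingFunctional_basisFreeMonoid (w : FreeMonoid (Fin 3)) :
    separatingFunctional K (FreeAlgebra.basisFreeMonoid K (Fin 3) w) = separatingWeight w.toList :=
  (FreeAlgebra.basisFreeMonoid K (Fin 3)).constr_basis _ _ _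

theorem lcsIdeal_four_le_ker_separatingFunctional :
    lcsIdeal K (FreeAlgebra K (Fin 3)) 4 ≤ LinearMap.ker (separatingFunctional K) := by
  refine FreeAlgebra.lcsIdeal_four_le_of_basisFreeMonoid fun p b a c d q ↦ ?_
  have h := congrArg (Int.cast : ℤ → K) <|
    separatingWeight_nested_commutator p.toList b.toList a.toList c.toList d.toList q.toList
  push_cast at h
  simp only [LinearMap.mem_ker, Ring.lie_def, mul_sub, sub_mul, ← mul_assoc,
    ← FreeAlgebra.basisFreeMonoid_mul, map_sub, separatingFunctional_basisFreeMonoid,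
    FreeMonoid.toList_mul]
  linear_combination h

theorem separatingFunctional_witness :
    separatingFunctional K (⁅FreeAlgebra.ι K (0 : Fin 3), FreeAlgebra.ι K 1⁆ *
      ⁅FreeAlgebra.ι K (0 : Fin 3), FreeAlgebra.ι K 2⁆) = 1 := by
  simp only [← FreeAlgebra.basisFreeMonoid_of, Ring.lie_def, mul_sub, sub_mul, ← mul_assoc,
    ← FreeAlgebra.basisFreeMonoid_mul, map_sub, separatingFunctional_basisFreeMonoid,
    FreeMonoid.toList_mul, FreeMonoid.toList_of]
  norm_num [separatingWeight, Fin.ext_iff]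

theorem FreeAlgebra.lcsIdeal_two_mul_not_le_four [Nontrivial K] :
    ¬ lcsIdeal K (FreeAlgebra K (Fin 3)) 2 * lcsIdeal K (FreeAlgebra K (Fin 3)) 2 ≤
      lcsIdeal K (FreeAlgebra K (Fin 3)) 4 := by
  intro h
  have hw := lcsIdeal_four_le_ker_separatingFunctional <| h <|
    mul_mem_mul (lowerCentral_le_lcsIdeal 2 (lie_mem_lowerCentral_two (ι K 0) (ι K 1)))
      (lowerCentral_le_lcsIdeal 2 (lie_mem_lowerCentral_two (ι K 0) (ι K 2)))
  rw [LinearMap.mem_ker, separatingFunctional_witness] at hw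
  exact one_ne_zero hw

end Separating

/-- in the free associative algebra `A_3` on three generators,
`M_2(A_3) · M_2(A_3)` is contained in `M_3(A_3)` but not in `M_4(A_3)`;
that is, `I(A_3, (2,2)) = 3`. -/
theorem I_A3_two_two
    (K : Type*) [Field K] [CharZero K] :
    lcsIdeal K (FreeAlgebra K (Fin 3)) 2 * lcsIdeal K (FreeAlgebra K (Fin 3)) 2 ≤
        lcsIdeal K (FreeAlgebra K (Fin 3)) 3 ∧
    ¬ lcsIdeal K (FreeAlgebra K (Fin 3)) 2 * lcsIdeal K (FreeAlgebra K (Fin 3)) 2 ≤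
        lcsIdeal K (FreeAlgebra K (Fin 3)) 4 := by
  have : Invertible (2 : K) := invertibleOfNonzero two_ne_zero
  exact ⟨FreeAlgebra.lcsIdeal_two_mul_le_three (by simp), FreeAlgebra.lcsIdeal_two_mul_not_le_four⟩
end

section
/- In the free associative algebra A_3 on three generators x, y, z over a field of characteristic zero, the element [x,y]·[z,[x,[x,y]]] = ⁅x,y⁆ * ⁅z, ⁅x, ⁅x, y⁆⁆⁆ lies in the ideal M_5(A_3). -/
set_option maxHeartbeats 4000000


/-- The commutator bracket `⁅a, b⁆ = a * b - b * a` in a ring. -/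
def ringBracket {R : Type*} [Ring R] (a b : R) : R := a * b - b * a

lemma bracket_mem_lowerCentral {K : Type*} [CommRing K] {R : Type*} [Ring R] [Algebra K R]
    (n : ℕ) (a l : R) (hl : l ∈ lowerCentral K R (n + 1)) :
    ringBracket a l ∈ lowerCentral K R (n + 2) := by
  rw [lowerCentral]
  exact Submodule.subset_span ⟨a, l, hl, rfl⟩

lemma b5_mem_lowerCentral {K : Type*} [CommRing K] {R : Type*} [Ring R] [Algebra K R]
    (a b c d e : R) :
    ringBracket a (ringBracket b (ringBracket c (ringBracket d e))) ∈ lowerCentral K R 5 :=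
  bracket_mem_lowerCentral 3 _ _ (bracket_mem_lowerCentral 2 _ _
    (bracket_mem_lowerCentral 1 _ _ (bracket_mem_lowerCentral 0 _ _ Submodule.mem_top)))

lemma aux_mem_lcsIdeal5 {K : Type*} [CommRing K] {R : Type*} [Ring R] [Algebra K R]
    (A B a b c d e : R) :
    A * ringBracket a (ringBracket b (ringBracket c (ringBracket d e))) * B ∈
      lcsIdeal K R 5 :=
  Submodule.subset_span ⟨A, B, _, b5_mem_lowerCentral a b c d e, rfl⟩

/-- in the free associative algebra `A_3` on three generators `x, y, z`,
the element `[x,y] · [z,[x,[x,y]]] = ⁅x,y⁆ * ⁅z, ⁅x, ⁅x, y⁆⁆⁆` lies in `M_5(A_3)`. -/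
theorem element_in_M5_zxxy
    (K : Type*) [Field K] [CharZero K] :
    ringBracket (FreeAlgebra.ι K (0 : Fin 3)) (FreeAlgebra.ι K (1 : Fin 3)) *
        ringBracket (FreeAlgebra.ι K (2 : Fin 3))
          (ringBracket (FreeAlgebra.ι K (0 : Fin 3))
            (ringBracket (FreeAlgebra.ι K (0 : Fin 3)) (FreeAlgebra.ι K (1 : Fin 3)))) ∈
      lcsIdeal K (FreeAlgebra K (Fin 3)) 5 := by
  set X := FreeAlgebra.ι K (0 : Fin 3) with hX
  set Y := FreeAlgebra.ι K (1 : Fin 3) with hY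
  set Z := FreeAlgebra.ι K (2 : Fin 3) with hZ
  set T := ringBracket X Y * ringBracket Z (ringBracket X (ringBracket X Y)) with hT
  have key : T + T =
      (-2 : FreeAlgebra K (Fin 3)) * (ringBracket X (ringBracket X (ringBracket X (ringBracket Y (Z * Y))))) * 1 +
      (4 : FreeAlgebra K (Fin 3)) * (ringBracket X (ringBracket X (ringBracket Y (ringBracket X (Z * Y))))) * 1 +
      (-4 : FreeAlgebra K (Fin 3)) * (ringBracket X (ringBracket X (ringBracket Y (ringBracket Y (X * Z))))) * 1 +
      (4 : FreeAlgebra K (Fin 3)) * (ringBracket X (ringBracket X (ringBracket Y (ringBracket Y (Z * X))))) * 1 +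
      (1 : FreeAlgebra K (Fin 3)) * (ringBracket X (ringBracket X (ringBracket Z (ringBracket X (Y * Y))))) * 1 +
      (-6 : FreeAlgebra K (Fin 3)) * (ringBracket X (ringBracket Y (ringBracket X (ringBracket X (Y * Z))))) * 1 +
      (14 : FreeAlgebra K (Fin 3)) * (ringBracket X (ringBracket Y (ringBracket X (ringBracket Y (X * Z))))) * 1 +
      (-18 : FreeAlgebra K (Fin 3)) * (ringBracket X (ringBracket Y (ringBracket X (ringBracket Y (Z * X))))) * 1 +
      (-5 : FreeAlgebra K (Fin 3)) * (ringBracket X (ringBracket Y (ringBracket Y (ringBracket X (X * Z))))) * 1 +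
      (3 : FreeAlgebra K (Fin 3)) * (ringBracket X (ringBracket Y (ringBracket Y (ringBracket X (Z * X))))) * 1 +
      (-4 : FreeAlgebra K (Fin 3)) * (ringBracket X (ringBracket Y (ringBracket Z (ringBracket X (X * Y))))) * 1 +
      (6 : FreeAlgebra K (Fin 3)) * (ringBracket X (ringBracket Z (ringBracket Y (ringBracket X (X * Y))))) * 1 +
      (2 : FreeAlgebra K (Fin 3)) * (ringBracket Y (ringBracket X (ringBracket X (ringBracket X (Y * Z))))) * 1 +
      (-6 : FreeAlgebra K (Fin 3)) * (ringBracket Y (ringBracket X (ringBracket X (ringBracket Y (X * Z))))) * 1 +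
      (8 : FreeAlgebra K (Fin 3)) * (ringBracket Y (ringBracket X (ringBracket X (ringBracket Y (Z * X))))) * 1 +
      (2 : FreeAlgebra K (Fin 3)) * (ringBracket Y (ringBracket X (ringBracket Y (ringBracket X (X * Z))))) * 1 +
      (2 : FreeAlgebra K (Fin 3)) * (ringBracket Y (ringBracket X (ringBracket Y (ringBracket X (Z * X))))) * 1 +
      (-4 : FreeAlgebra K (Fin 3)) * (ringBracket Y (ringBracket X (ringBracket Z (ringBracket X (X * Y))))) * 1 +
      (1 : FreeAlgebra K (Fin 3)) * (ringBracket Y (ringBracket Y (ringBracket X (ringBracket X (X * Z))))) * 1 +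
      (-1 : FreeAlgebra K (Fin 3)) * (ringBracket Y (ringBracket Y (ringBracket X (ringBracket X (Z * X))))) * 1 +
      (6 : FreeAlgebra K (Fin 3)) * (ringBracket Y (ringBracket Z (ringBracket X (ringBracket X (X * Y))))) * 1 +
      (-1 : FreeAlgebra K (Fin 3)) * (ringBracket Z (ringBracket X (ringBracket X (ringBracket X (Y * Y))))) * 1 +
      (-6 : FreeAlgebra K (Fin 3)) * (ringBracket Z (ringBracket X (ringBracket Y (ringBracket X (X * Y))))) * 1 +
      ((2 : FreeAlgebra K (Fin 3)) * Y) * (ringBracket X (ringBracket X (ringBracket X (ringBracket Y Z)))) * 1 +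
      ((-2 : FreeAlgebra K (Fin 3)) * Z) * (ringBracket X (ringBracket X (ringBracket Y (ringBracket X Y)))) * 1 := by
    rw [hT]
    simp only [ringBracket]
    noncomm_ring
  have h2 : (2 : K) • T ∈ lcsIdeal K (FreeAlgebra K (Fin 3)) 5 := by
    rw [two_smul, key]
    repeat' apply add_mem
    all_goals apply aux_mem_lcsIdeal5
  have h3 := (lcsIdeal K (FreeAlgebra K (Fin 3)) 5).smul_mem ((2 : K)⁻¹) h2
  rwa [smul_smul, inv_mul_cancel₀ (by norm_num : (2 : K) ≠ 0), one_smul] at h3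
end
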